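/- arXiv:2402.16826 — 9 statements merged into one kernel-verified Lean document; each statement's English description precedes it below -/
import Mathlib

section
/- Let b, c ∈ ℂ and let k ≥ 1 be an integer. Then the polynomials P_k(z) and P_{k+1}(z) satisfy the three-term recurrence (after clearing the denominator k−1+c): k(k−1+b+c)·z·(k−1+c)⁻¹·P_{k−1}(z) = (kz + k + bz + c)·P_k(z) − (k+c)·P_{k+1}(z), as an identity of polynomials in z, provided (c)_{k+1} ≠ 0 (so that P_{k−1}, P_k, P_{k+1} are all well defined and k−1+c ≠ 0). -/
/-!
Up to the scalar `m! / (c)_m`, the polynomial `P_m` equals `Q_m`, the coefficient of `t ^ m` in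
`(1 - z t) ^ (-b) * (1 - t) ^ (-c)`: this rests on `(-m)_j (m - j)! = (-1) ^ j m!` and
`(1 - m - c)_j (c)_{m-j} = (-1) ^ j (c)_m`. The recurrence then becomes the division-free identity
`(m + 2) Q_{m+2} = ((m + 1 + b) z + m + 1 + c) Q_{m+1} - (m + b + c) z Q_m`, which is checked
coefficientwise from `(j + 1) (a)_{j+1} / (j + 1)! = (a + j) (a)_j / j!`.
-/

open Polynomial Finset

/-- The Gauss hypergeometric polynomial `₂F₁(-k, b; 1-k-c; z)` as a polynomial in `z`. -/
noncomputable def hypP (b c : ℂ) (k : ℕ) : Polynomial ℂ :=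
  ∑ j ∈ Finset.range (k + 1),
    Polynomial.C ((ascPochhammer ℂ j).eval (-(k : ℂ)) * (ascPochhammer ℂ j).eval b /
      ((ascPochhammer ℂ j).eval (1 - (k : ℂ) - c) * (j.factorial : ℂ))) * Polynomial.X ^ j

open scoped Nat

section Pochhammer

variable {R : Type*} [CommRing R]

theorem ascPochhammer_eval_ne_zero_of_le [NoZeroDivisors R] {c : R} {m n : ℕ} (hnm : n ≤ m)
    (hm : (ascPochhammer R m).eval c ≠ 0) : (ascPochhammer R n).eval c ≠ 0 := by
  induction m, hnm using Nat.le_induction with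
  | base => exact hm
  | succ m _ ih => exact ih (left_ne_zero_of_mul (ascPochhammer_succ_eval m c ▸ hm))

theorem ascPochhammer_eval_neg_natCast_mul_factorial {j m : ℕ} (h : j ≤ m) :
    (ascPochhammer R j).eval (-(m : R)) * ((m - j)! : R) = (-1) ^ j * m ! := by
  rw [ascPochhammer_eval_neg_eq_descPochhammer, descPochhammer_eval_eq_descFactorial, mul_assoc,
    ← Nat.cast_mul, mul_comm (m.descFactorial j), Nat.factorial_mul_descFactorial h]

theorem ascPochhammer_eval_one_sub_sub_mul (c : R) {j m : ℕ} (h : j ≤ m) :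
    (ascPochhammer R j).eval (1 - m - c) * (ascPochhammer R (m - j)).eval c
      = (-1) ^ j * (ascPochhammer R m).eval c := by
  have hsplit := congrArg (eval c) (ascPochhammer_mul R (m - j) j)
  rw [Nat.sub_add_cancel h, eval_mul, eval_comp, eval_add, eval_X, eval_natCast] at hsplit
  rw [← hsplit, show (1 : R) - m - c = -(c + (m - j : ℕ) + j - 1) by push_cast [h]; ring,
    ascPochhammer_eval_neg_eq_descPochhammer, descPochhammer_eval_eq_ascPochhammer]
  ring_nf

end Pochhammer

section RisingCoeff

variable {F : Type*} [Field F]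

noncomputable def risingCoeff (a : F) (j : ℕ) : F := (ascPochhammer F j).eval a / j !

theorem risingCoeff_zero (a : F) : risingCoeff a 0 = 1 := by
  simp [risingCoeff]

theorem risingCoeff_succ [CharZero F] (a : F) (j : ℕ) :
    risingCoeff a (j + 1) = risingCoeff a j * (a + j) / (j + 1) := by
  rw [risingCoeff, risingCoeff, ascPochhammer_succ_eval, Nat.factorial_succ]
  push_cast
  field_simp

noncomputable def hypQ (b c : F) (m : ℕ) : F[X] :=
  ∑ j ∈ range (m + 1), C (risingCoeff b j * risingCoeff c (m - j)) * X ^ j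

theorem coeff_hypQ (b c : F) (m n : ℕ) :
    (hypQ b c m).coeff n = if n ≤ m then risingCoeff b n * risingCoeff c (m - n) else 0 := by
  simp only [hypQ, finsetSum_coeff, coeff_C_mul_X_pow, sum_ite_eq, mem_range, Nat.lt_succ_iff]

theorem hypQ_recurrence [CharZero F] (b c : F) (m : ℕ) :
    C ((m : F) + 2) * hypQ b c (m + 2)
      = (C ((m : F) + 1 + b) * X + C ((m : F) + 1 + c)) * hypQ b c (m + 1)
        - C ((m : F) + b + c) * X * hypQ b c m := by
  ext (_ | n)
  · simp only [coeff_C_mul, coeff_sub, add_mul, coeff_add, mul_assoc, coeff_X_mul_zero,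
      mul_zero, zero_add, sub_zero, coeff_hypQ, zero_le, if_true, Nat.sub_zero, risingCoeff_zero,
      one_mul]
    have := Nat.cast_add_one_ne_zero (R := F) (m + 1)
    rw [risingCoeff_succ c (m + 1)]
    push_cast at this ⊢
    field_simp
    ring
  simp only [coeff_C_mul, coeff_sub, add_mul, coeff_add, mul_assoc, coeff_X_mul, coeff_hypQ]
  obtain hle | rfl | hlt : n ≤ m ∨ n = m + 1 ∨ m + 1 < n := by omega
  · obtain ⟨d, rfl⟩ := Nat.exists_eq_add_of_le hle
    simp only [show n + 1 ≤ n + d + 2 by omega, show n ≤ n + d + 1 by omega,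
      show n + 1 ≤ n + d + 1 by omega, hle, if_true,
      show n + d + 2 - (n + 1) = d + 1 by omega, show n + d + 1 - n = d + 1 by omega,
      show n + d + 1 - (n + 1) = d by omega, Nat.add_sub_cancel_left]
    rw [risingCoeff_succ b n, risingCoeff_succ c d]
    push_cast
    field_simp
    ring
  · simp only [le_refl, show ¬ m + 1 + 1 ≤ m + 1 by omega,
      show ¬ m + 1 ≤ m by omega, if_true, if_false, Nat.sub_self, risingCoeff_zero]
    have := Nat.cast_add_one_ne_zero (R := F) (m + 1)
    rw [show m + 2 = m + 1 + 1 by omega, risingCoeff_succ b (m + 1)]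
    push_cast at this ⊢
    field_simp
    ring
  · simp only [show ¬ n + 1 ≤ m + 2 by omega, show ¬ n ≤ m + 1 by omega,
      show ¬ n + 1 ≤ m + 1 by omega, show ¬ n ≤ m by omega, if_false]
    ring

end RisingCoeff

theorem hypP_eq_C_mul_hypQ (b c : ℂ) (m : ℕ) (hc : (ascPochhammer ℂ m).eval c ≠ 0) :
    hypP b c m = C (m ! / (ascPochhammer ℂ m).eval c) * hypQ b c m := by
  rw [hypP, hypQ, mul_sum]
  refine sum_congr rfl fun j hj => ?_
  have hjm : j ≤ m := Nat.lt_succ_iff.mp (mem_range.mp hj)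
  have hnum := ascPochhammer_eval_neg_natCast_mul_factorial (R := ℂ) hjm
  have hden := ascPochhammer_eval_one_sub_sub_mul c hjm
  rw [← mul_assoc, ← C_mul]
  congr 2
  have : (ascPochhammer ℂ j).eval (1 - m - c) ≠ 0 := by
    intro h; apply hc; simpa [h] using hden.symm
  rw [risingCoeff, risingCoeff]
  field_simp
  rw [div_eq_div_iff (by simp [Nat.factorial_ne_zero]) (by simp [Nat.factorial_ne_zero])]
  linear_combination ((ascPochhammer ℂ j).eval b * j ! * (ascPochhammer ℂ m).eval c) * hnum
    - ((ascPochhammer ℂ j).eval b * j ! * m !) * hden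

/-- The three-term contiguous recurrence for the hypergeometric polynomials `P k`. -/
theorem stmt_0 (b c : ℂ) (k : ℕ) (hk : 1 ≤ k)
    (hc : (ascPochhammer ℂ (k + 1)).eval c ≠ 0) :
    Polynomial.C ((k : ℂ) * ((k : ℂ) - 1 + b + c) / ((k : ℂ) - 1 + c)) * Polynomial.X *
        hypP b c (k - 1)
      = (Polynomial.C ((k : ℂ) + b) * Polynomial.X + Polynomial.C ((k : ℂ) + c)) * hypP b c k
        - Polynomial.C ((k : ℂ) + c) * hypP b c (k + 1) := by
  obtain ⟨m, rfl⟩ := Nat.exists_eq_add_of_le' hk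
  have hc₁ : (ascPochhammer ℂ (m + 1)).eval c ≠ 0 :=
    ascPochhammer_eval_ne_zero_of_le (m + 1).le_succ hc
  have hc₀ : (ascPochhammer ℂ m).eval c ≠ 0 := ascPochhammer_eval_ne_zero_of_le m.le_succ hc₁
  have hcm₀ : (m : ℂ) + c ≠ 0 := by
    rw [add_comm]; exact right_ne_zero_of_mul (ascPochhammer_succ_eval m c ▸ hc₁)
  have hcm₁ : c + ((m : ℂ) + 1) ≠ 0 := by
    exact_mod_cast right_ne_zero_of_mul (ascPochhammer_succ_eval (m + 1) c ▸ hc)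
  rw [Nat.add_sub_cancel, hypP_eq_C_mul_hypQ b c m hc₀, hypP_eq_C_mul_hypQ b c _ hc₁,
    hypP_eq_C_mul_hypQ b c _ hc]
  set s := ((m + 1) ! / (ascPochhammer ℂ (m + 1)).eval c : ℂ) with hs
  push_cast
  rw [show m + 1 + 1 = m + 2 from rfl]
  have hα : C ((m + 1) * (m + 1 - 1 + b + c) / (m + 1 - 1 + c))
      * C (m ! / (ascPochhammer ℂ m).eval c) = C s * C (m + b + c) := by
    rw [← C_mul, ← C_mul, hs, ascPochhammer_succ_eval, Nat.factorial_succ]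
    congr 1
    push_cast
    field_simp
    ring
  have hγ : C ((m : ℂ) + 1 + c) * C ((m + 2) ! / (ascPochhammer ℂ (m + 2)).eval c)
      = C s * C ((m : ℂ) + 2) := by
    rw [← C_mul, ← C_mul, hs, ascPochhammer_succ_eval, Nat.factorial_succ]
    congr 1
    push_cast
    field_simp
    ring
  linear_combination (X * hypQ b c m) * hα + C s * hypQ_recurrence b c m + hypQ b c (m + 2) * hγ
end

section
/- Let b, c ∈ ℂ and let k ≥ 1 be an integer such that (b)_k ≠ 0, (c)_k ≠ 0, and (b+c)_k ≠ 0. Then the polynomials P_k(z) and P_{k−1}(z) have no common root in ℂ. -/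
/-!
Since `(-k)_j = (-1)^j j! C(k,j)` and `(1-k-c)_j = (-1)^j (c+k-j)_j`, the polynomial `(c)_k P_k`
is `Q_k(z) = ∑_j C(k,j) (b)_j (c)_{k-j} z^j`. These satisfy the three-term recurrence
`Q_{n+2} = (c+n+1 + (b+n+1) z) Q_{n+1} - (n+1)(b+c+n) z Q_n`. A common root `z` of `Q_k` and
`Q_{k-1}` is nonzero because `Q_k(0) = (c)_k`, so the recurrence and `b+c+k-2 ≠ 0` make it a root
of `Q_{k-2}` as well; descending, it would be a root of `Q_0 = 1`.
-/

open Polynomial Finset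

section

variable {R : Type*} [CommRing R]

theorem ascPochhammer_eval_add_nat (c : R) (m j : ℕ) :
    (ascPochhammer R (m + j)).eval c =
      (ascPochhammer R m).eval c * (ascPochhammer R j).eval (c + m) := by
  rw [← ascPochhammer_mul, eval_mul, eval_comp]
  simp

theorem ascPochhammer_eval_ne_zero_of_le_s1 {c : R} {m k : ℕ} (hmk : m ≤ k)
    (hc : (ascPochhammer R k).eval c ≠ 0) : (ascPochhammer R m).eval c ≠ 0 := by
  obtain ⟨d, rfl⟩ := Nat.exists_eq_add_of_le hmk
  exact left_ne_zero_of_mul (ascPochhammer_eval_add_nat c m d ▸ hc)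

theorem ascPochhammer_eval_neg_natCast (k j : ℕ) :
    (ascPochhammer R j).eval (-(k : R)) = (-1) ^ j * (j.factorial * k.choose j) := by
  rw [ascPochhammer_eval_neg_eq_descPochhammer, descPochhammer_eval_eq_descFactorial,
    Nat.descFactorial_eq_factorial_mul_choose, Nat.cast_mul]

theorem ascPochhammer_eval_one_sub_natCast_sub {k j : ℕ} (hj : j ≤ k) (c : R) :
    (ascPochhammer R j).eval (1 - k - c) =
      (-1) ^ j * (ascPochhammer R j).eval (c + (k - j : ℕ)) := by
  rw [show (1 : R) - k - c = -(c + k - 1) by ring, ascPochhammer_eval_neg_eq_descPochhammer,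
    descPochhammer_eval_eq_ascPochhammer, Nat.cast_sub hj]
  ring_nf

noncomputable def pochhammerBinomial (b c : R) (k : ℕ) : R[X] :=
  ∑ j ∈ range (k + 1),
    C (k.choose j * (ascPochhammer R j).eval b * (ascPochhammer R (k - j)).eval c) * X ^ j

theorem pochhammerBinomial_coeff (b c : R) (k j : ℕ) :
    (pochhammerBinomial b c k).coeff j =
      k.choose j * (ascPochhammer R j).eval b * (ascPochhammer R (k - j)).eval c := by
  rw [pochhammerBinomial, finsetSum_coeff]
  simp only [coeff_C_mul_X_pow, Finset.sum_ite_eq, mem_range, ite_eq_left_iff, not_lt]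
  intro hkj
  rw [Nat.choose_eq_zero_of_lt (by omega), Nat.cast_zero, zero_mul, zero_mul]

theorem pochhammerBinomial_zero (b c : R) : pochhammerBinomial b c 0 = 1 := by
  simp [pochhammerBinomial]

theorem pochhammerBinomial_eval_zero (b c : R) (k : ℕ) :
    (pochhammerBinomial b c k).eval 0 = (ascPochhammer R k).eval c := by
  simp [← coeff_zero_eq_eval_zero, pochhammerBinomial_coeff]

theorem pochhammerBinomial_add_two (b c : R) (n : ℕ) :
    pochhammerBinomial b c (n + 2) =
      (C (c + (n + 1)) + C (b + (n + 1)) * X) * pochhammerBinomial b c (n + 1) -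
        C ((n + 1) * (b + c + n)) * X * pochhammerBinomial b c n := by
  rw [show ∀ p q : R[X],
      (C (c + (n + 1)) + C (b + (n + 1)) * X) * p - C ((n + 1) * (b + c + n)) * X * q =
        C (c + (n + 1)) * p + C (b + (n + 1)) * (X * p) - C ((n + 1) * (b + c + n)) * (X * q)
      from fun p q => by ring]
  ext (_ | j)
  · simp only [coeff_sub, coeff_add, coeff_C_mul, coeff_X_mul_zero, pochhammerBinomial_coeff,
      Nat.choose_zero_right, Nat.sub_zero, ascPochhammer_zero, eval_one,
      ascPochhammer_succ_eval (n + 1)]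
    push_cast
    ring
  simp only [coeff_sub, coeff_add, coeff_C_mul, coeff_X_mul, pochhammerBinomial_coeff]
  obtain ⟨m, rfl⟩ | hnj := le_or_gt j n |>.imp_left Nat.exists_eq_add_of_le
  · rw [show j + m + 2 - (j + 1) = m + 1 by omega, show j + m + 1 - (j + 1) = m by omega,
      show j + m + 1 - j = m + 1 by omega, show j + m - j = m by omega,
      show j + m + 2 = j + m + 1 + 1 by rfl, Nat.choose_succ_succ']
    -- after Pascal's rule, what is left is
    -- `(j+1) C(j+m+1, j+1) = (j+m+1) C(j+m, j) = (m+1) C(j+m+1, j)`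
    have hj := congrArg (Nat.cast : ℕ → R) (Nat.add_one_mul_choose_eq (j + m) j)
    have hm := congrArg (Nat.cast : ℕ → R) (Nat.choose_mul_succ_eq (j + m) j)
    rw [show j + m + 1 - j = m + 1 by omega] at hm
    push_cast at hj hm
    simp only [ascPochhammer_succ_eval]
    push_cast
    linear_combination (eval b (ascPochhammer R j) * eval c (ascPochhammer R m)) *
      ((b + j) * hj + (c + m) * hm)
  · rcases Nat.lt_or_eq_of_le hnj with hlt | rfl
    · rw [Nat.choose_eq_zero_of_lt (by omega : n + 2 < j + 1),
        Nat.choose_eq_zero_of_lt (by omega : n + 1 < j + 1),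
        Nat.choose_eq_zero_of_lt hlt, Nat.choose_eq_zero_of_lt hnj]
      simp
    · simp [ascPochhammer_succ_eval]
      ring

theorem pochhammerBinomial_no_common_root [IsDomain R] [CharZero R] {b c : R} {k : ℕ}
    (hc : (ascPochhammer R k).eval c ≠ 0) (hbc : (ascPochhammer R k).eval (b + c) ≠ 0) (z : R) :
    ¬ ((pochhammerBinomial b c k).eval z = 0 ∧ (pochhammerBinomial b c (k - 1)).eval z = 0) := by
  induction k using Nat.twoStepInduction with
  | zero => simp [pochhammerBinomial_zero]
  | one => simp [pochhammerBinomial_zero]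
  | more n _ ih =>
    rintro ⟨hzn2, hzn1 : (pochhammerBinomial b c (n + 1)).eval z = 0⟩
    rw [ascPochhammer_succ_eval] at hc hbc
    have hc' := left_ne_zero_of_mul hc
    have hbc' := left_ne_zero_of_mul hbc
    have hbcn : b + c + n ≠ 0 := right_ne_zero_of_mul (ascPochhammer_succ_eval n (b + c) ▸ hbc')
    have hz : z ≠ 0 := by
      rintro rfl
      exact hc' (pochhammerBinomial_eval_zero b c (n + 1) ▸ hzn1)
    have hzn : (pochhammerBinomial b c n).eval z = 0 := by
      have h := congrArg (eval z) (pochhammerBinomial_add_two b c n)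
      simp only [eval_sub, eval_mul, hzn1, hzn2, eval_C, eval_X, mul_zero, zero_sub,
        zero_eq_neg] at h
      simpa [hz, hbcn, Nat.cast_add_one_ne_zero] using h
    exact ih hc' hbc' ⟨hzn1, hzn⟩

end

theorem hypP_eq_C_inv_mul_pochhammerBinomial (b c : ℂ) (k : ℕ)
    (hc : (ascPochhammer ℂ k).eval c ≠ 0) :
    hypP b c k = C ((ascPochhammer ℂ k).eval c)⁻¹ * pochhammerBinomial b c k := by
  ext j
  rw [coeff_C_mul, pochhammerBinomial_coeff, hypP, finsetSum_coeff]
  simp only [coeff_C_mul_X_pow, Finset.sum_ite_eq, mem_range]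
  split_ifs with hj
  · have hjk : j ≤ k := Nat.lt_succ_iff.mp hj
    have hsplit := ascPochhammer_eval_add_nat c (k - j) j
    rw [Nat.sub_add_cancel hjk] at hsplit
    have h1 : (ascPochhammer ℂ (k - j)).eval c ≠ 0 :=
      ascPochhammer_eval_ne_zero_of_le_s1 (Nat.sub_le k j) hc
    have h2 : (ascPochhammer ℂ j).eval (c + (k - j : ℕ)) ≠ 0 := right_ne_zero_of_mul (hsplit ▸ hc)
    have h3 : (j.factorial : ℂ) ≠ 0 := Nat.cast_ne_zero.mpr j.factorial_ne_zero
    rw [ascPochhammer_eval_neg_natCast, ascPochhammer_eval_one_sub_natCast_sub hjk, hsplit]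
    field_simp
  · rw [Nat.choose_eq_zero_of_lt (by omega)]
    simp

theorem stmt_1_general (b c : ℂ) (k : ℕ)
    (hc : (ascPochhammer ℂ k).eval c ≠ 0)
    (hbc : (ascPochhammer ℂ k).eval (b + c) ≠ 0) :
    ∀ z : ℂ, ¬ ((hypP b c k).eval z = 0 ∧ (hypP b c (k - 1)).eval z = 0) := by
  have hc' : (ascPochhammer ℂ (k - 1)).eval c ≠ 0 :=
    ascPochhammer_eval_ne_zero_of_le_s1 (Nat.sub_le k 1) hc
  intro z
  simpa [hypP_eq_C_inv_mul_pochhammerBinomial b c _ hc,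
    hypP_eq_C_inv_mul_pochhammerBinomial b c _ hc', hc, hc'] using
    pochhammerBinomial_no_common_root hc hbc z

/-- `P k` and `P (k-1)` have no common root. -/
theorem stmt_1 (b c : ℂ) (k : ℕ) (hk : 1 ≤ k)
    (hb : (ascPochhammer ℂ k).eval b ≠ 0)
    (hc : (ascPochhammer ℂ k).eval c ≠ 0)
    (hbc : (ascPochhammer ℂ k).eval (b + c) ≠ 0) :
    ∀ z : ℂ, ¬ ((hypP b c k).eval z = 0 ∧ (hypP b c (k - 1)).eval z = 0) :=
  stmt_1_general b c k hc hbc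
end

section
/- Let e, z ∈ ℚ (or in any field of characteristic 0) with z ≠ 0, z ≠ 1, and 3e+2z+2 ≠ 0. Define b = e(e+1)(e+2) / (z(1−z)(3e+2z+2)) and c = e(e+z)(e+2z) / ((z−1)(3e+2z+2)). Then S(b,c,z) = 0; that is, the point (b, c, z) lies on the algebraic surface S₃ defined by the cubic hypergeometric equation, so this gives a (birational) parametrization of S₃ by the coordinates e and z. -/
/-!
With `w = z(1 - z)(3e + 2z + 2)` the common denominator, `b w` and `c w` are polynomials in `e, z`.
Since `S` is cubic in `(b, c)`, `w³ S(b, c, z)` is the homogenised cubic evaluated at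
`(b w, c w, w)`, and that polynomial in `e, z` vanishes identically.
-/

/-- The homogenisation of `S` in `(b, c)`: `surfaceHom b c 1 z = S(b, c, z)`. -/
def surfaceHom {R : Type*} [CommRing R] (b c w z : R) : R :=
  b * (b + w) * (b + 2 * w) * z ^ 3 + 3 * b * c * (b + w) * z ^ 2
    + 3 * b * c * (c + w) * z + c * (c + w) * (c + 2 * w)

section
variable {R : Type*} [CommRing R]

theorem surfaceHom_mul (b c w z : R) :
    surfaceHom (b * w) (c * w) w z = w ^ 3 * (b * (b + 1) * (b + 2) * z ^ 3
      + 3 * b * c * (b + 1) * z ^ 2 + 3 * b * c * (c + 1) * z + c * (c + 1) * (c + 2)) := by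
  unfold surfaceHom; ring

theorem surfaceHom_parametrization (e z : R) :
    surfaceHom (e * (e + 1) * (e + 2)) (-(z * (e * (e + z) * (e + 2 * z))))
      (z * (1 - z) * (3 * e + 2 * z + 2)) z = 0 := by
  unfold surfaceHom; ring

end

theorem stmt_11_general {K : Type*} [Field K] (e z : K)
    (hz0 : z ≠ 0) (hz1 : z ≠ 1) (he : 3 * e + 2 * z + 2 ≠ 0)
    (b c : K)
    (hb : b = e * (e + 1) * (e + 2) / (z * (1 - z) * (3 * e + 2 * z + 2)))
    (hc : c = e * (e + z) * (e + 2 * z) / ((z - 1) * (3 * e + 2 * z + 2))) :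
    b * (b + 1) * (b + 2) * z ^ 3 + 3 * b * c * (b + 1) * z ^ 2
      + 3 * b * c * (c + 1) * z + c * (c + 1) * (c + 2) = 0 := by
  set w := z * (1 - z) * (3 * e + 2 * z + 2) with hw_def
  have hw : w ≠ 0 := mul_ne_zero (mul_ne_zero hz0 (sub_ne_zero.mpr hz1.symm)) he
  have hbw : b * w = e * (e + 1) * (e + 2) := by
    rw [hb]; exact div_mul_cancel₀ _ hw
  have hcw : c * w = -(z * (e * (e + z) * (e + 2 * z))) := by
    have hz1' : z - 1 ≠ 0 := sub_ne_zero.mpr hz1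
    rw [hc, hw_def, div_mul_eq_mul_div, div_eq_iff (mul_ne_zero hz1' he)]
    ring
  have h := surfaceHom_mul b c w z
  rw [hbw, hcw, surfaceHom_parametrization] at h
  exact (mul_eq_zero.mp h.symm).resolve_left (pow_ne_zero 3 hw)

/-- The parametrization of the surface `S₃ : ₂F₁(-3, b; -c-2; z) = 0` by `e` and `z`. -/
theorem stmt_11 {K : Type*} [Field K] [CharZero K] (e z : K)
    (hz0 : z ≠ 0) (hz1 : z ≠ 1) (he : 3 * e + 2 * z + 2 ≠ 0)
    (b c : K)
    (hb : b = e * (e + 1) * (e + 2) / (z * (1 - z) * (3 * e + 2 * z + 2)))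
    (hc : c = e * (e + z) * (e + 2 * z) / ((z - 1) * (3 * e + 2 * z + 2))) :
    b * (b + 1) * (b + 2) * z ^ 3 + 3 * b * c * (b + 1) * z ^ 2
      + 3 * b * c * (c + 1) * z + c * (c + 1) * (c + 2) = 0 :=
  stmt_11_general e z hz0 hz1 he b c hb hc
end

section
/- Let t be transcendental over ℚ and work in the rational function field ℚ(t). Set b = t²/3 − 1 and c = −t²/6 − 1/2. Then the cubic polynomial S(b,c,z) = b(b+1)(b+2)z³ + 3bc(b+1)z² + 3bc(c+1)z + c(c+1)(c+2), viewed as a polynomial in z over ℚ(t), splits completely into linear factors over ℚ(t): there exist z₁, z₂, z₃ ∈ ℚ(t) with S(b,c,z) = b(b+1)(b+2)·(z−z₁)(z−z₂)(z−z₃). -/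
/-!
The roots are `(t + 3) / (2t)`, `(t - 3) / (2t)` and `1 / 2`: by Vieta's formulas the
factorization reduces to three identities between rational functions of `t`, valid whenever
`t ≠ 0` in characteristic zero.
-/

open Polynomial

theorem Polynomial.cubic_eq_C_mul_prod_X_sub_C {R : Type*} [CommRing R] {a p q r : R}
    (z₁ z₂ z₃ : R) (hp : p = -(a * (z₁ + z₂ + z₃)))
    (hq : q = a * (z₁ * z₂ + z₁ * z₃ + z₂ * z₃)) (hr : r = -(a * (z₁ * z₂ * z₃))) :
    C a * X ^ 3 + C p * X ^ 2 + C q * X + C r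
      = C a * (X - C z₁) * (X - C z₂) * (X - C z₃) := by
  subst hp hq hr
  simp only [map_mul, map_add, map_neg]
  ring

theorem hypergeometric_cubic_splits {K : Type*} [Field K] [CharZero K] {t b c : K}
    (ht : t ≠ 0) (hb : b = t ^ 2 / 3 - 1) (hc : c = -t ^ 2 / 6 - 1 / 2) :
    C (b * (b + 1) * (b + 2)) * X ^ 3 + C (3 * b * c * (b + 1)) * X ^ 2
        + C (3 * b * c * (c + 1)) * X + C (c * (c + 1) * (c + 2))
      = C (b * (b + 1) * (b + 2)) * (X - C ((t + 3) / (2 * t))) *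
          (X - C ((t - 3) / (2 * t))) * (X - C (1 / 2)) := by
  subst hb hc
  apply cubic_eq_C_mul_prod_X_sub_C <;> field_simp <;> ring

/-- For `b = t²/3 - 1` and `c = -t²/6 - 1/2` in `ℚ(t)`, the cubic
`S(b,c,z) = b(b+1)(b+2)z³ + 3bc(b+1)z² + 3bc(c+1)z + c(c+1)(c+2)` (as a polynomial in `z`)
splits completely into linear factors over `ℚ(t)`. -/
theorem stmt_12 (b c : RatFunc ℚ)
    (hb : b = RatFunc.X ^ 2 / 3 - 1) (hc : c = -RatFunc.X ^ 2 / 6 - 1 / 2) :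
    ∃ z₁ z₂ z₃ : RatFunc ℚ,
      Polynomial.C (b * (b + 1) * (b + 2)) * Polynomial.X ^ 3
          + Polynomial.C (3 * b * c * (b + 1)) * Polynomial.X ^ 2
          + Polynomial.C (3 * b * c * (c + 1)) * Polynomial.X
          + Polynomial.C (c * (c + 1) * (c + 2))
        = Polynomial.C (b * (b + 1) * (b + 2)) * (Polynomial.X - Polynomial.C z₁) *
            (Polynomial.X - Polynomial.C z₂) * (Polynomial.X - Polynomial.C z₃) :=
  ⟨_, _, _, hypergeometric_cubic_splits RatFunc.X_ne_zero hb hc⟩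
end

section
/- Let K be a field of characteristic 0 and let b, u, v ∈ K with b ∉ {0, −1, −2} and v ≠ 0. Suppose v² = u³ + b²(3u − 16b − 16)². Define c = −(b+2)(v + 3bu − 16b(b+1))/(2v) and z = (v + (3b+4)u − 16b(b+1))/(2v). Then S(b,c,z) = 0, i.e., (b, c, z) lies on the surface S₃; thus the map (u,v) ↦ (c,z) sends points of the elliptic curve E₃: v² = u³ + b²(3u−16b−16)² to points of the genus-1 curve cut out on S₃ by fixing b. -/
/-!
Writing `c = C / (2v)` and `z = Q / (2v)`, the cubic `S(b, c, z)` times `(2v)³` is the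
homogenised form of `S` evaluated at `(C, Q, 2v)`, which is a polynomial in `b, u, v`. That
polynomial is `64 b (b + 1) (b + 2) (u³ + b² (3u - 16b - 16)² - v²)`, so it vanishes on `E₃`.
-/

section HypergeometricSurface

variable {K : Type*} [Field K]

def surfaceS (b c z : K) : K :=
  b * (b + 1) * (b + 2) * z ^ 3 + 3 * b * c * (b + 1) * z ^ 2
    + 3 * b * c * (c + 1) * z + c * (c + 1) * (c + 2)

def surfaceSHom (b C Q w : K) : K :=
  b * (b + 1) * (b + 2) * Q ^ 3 + 3 * b * (b + 1) * C * Q ^ 2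
    + 3 * b * C * (C + w) * Q + C * (C + w) * (C + 2 * w)

theorem pow_three_mul_surfaceS_div {w : K} (hw : w ≠ 0) (b C Q : K) :
    w ^ 3 * surfaceS b (C / w) (Q / w) = surfaceSHom b C Q w := by
  unfold surfaceS surfaceSHom
  field_simp

theorem surfaceSHom_ellipticParam (b u v : K) :
    surfaceSHom b (-(b + 2) * (v + 3 * b * u - 16 * b * (b + 1)))
        (v + (3 * b + 4) * u - 16 * b * (b + 1)) (2 * v) =
      64 * b * (b + 1) * (b + 2) * (u ^ 3 + b ^ 2 * (3 * u - 16 * b - 16) ^ 2 - v ^ 2) := by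
  unfold surfaceSHom
  ring

end HypergeometricSurface

theorem stmt_13_general {K : Type*} [Field K] [CharZero K] (b u v : K)
    (hv : v ≠ 0)
    (hE : v ^ 2 = u ^ 3 + b ^ 2 * (3 * u - 16 * b - 16) ^ 2)
    (c z : K)
    (hc : c = -(b + 2) * (v + 3 * b * u - 16 * b * (b + 1)) / (2 * v))
    (hz : z = (v + (3 * b + 4) * u - 16 * b * (b + 1)) / (2 * v)) :
    b * (b + 1) * (b + 2) * z ^ 3 + 3 * b * c * (b + 1) * z ^ 2
      + 3 * b * c * (c + 1) * z + c * (c + 1) * (c + 2) = 0 := by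
  have h2v : (2 : K) * v ≠ 0 := mul_ne_zero two_ne_zero hv
  have hcleared : (2 * v) ^ 3 * surfaceS b c z = 0 := by
    rw [hc, hz, pow_three_mul_surfaceS_div h2v, surfaceSHom_ellipticParam, ← hE, sub_self,
      mul_zero]
  exact (mul_eq_zero.mp hcleared).resolve_left (pow_ne_zero 3 h2v)

/-- The isomorphism from the elliptic curve `E₃ : v² = u³ + b²(3u - 16b - 16)²` to the genus-1
curve cut out on the surface `S₃` by fixing `b`. -/
theorem stmt_13 {K : Type*} [Field K] [CharZero K] (b u v : K)
    (hb0 : b ≠ 0) (hb1 : b ≠ -1) (hb2 : b ≠ -2) (hv : v ≠ 0)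
    (hE : v ^ 2 = u ^ 3 + b ^ 2 * (3 * u - 16 * b - 16) ^ 2)
    (c z : K)
    (hc : c = -(b + 2) * (v + 3 * b * u - 16 * b * (b + 1)) / (2 * v))
    (hz : z = (v + (3 * b + 4) * u - 16 * b * (b + 1)) / (2 * v)) :
    b * (b + 1) * (b + 2) * z ^ 3 + 3 * b * c * (b + 1) * z ^ 2
      + 3 * b * c * (c + 1) * z + c * (c + 1) * (c + 2) = 0 :=
  stmt_13_general b u v hv hE c z hc hz
end

section
/- Let K be a field of characteristic 0 and let b, c, z ∈ K with b ∉ {0, −1, −2}. Suppose S(b,c,z) = 0 and W := bc + (b+2)(3bz + 2c + 2) ≠ 0. Define u = 16b(b+1)(bz + 2z + c)/W and v = 32b(b+1)(b+2)/W. Then v² = u³ + b²(3u − 16b − 16)²; that is, (u,v) is a point on the elliptic curve E₃, and this map is inverse to the parametrization c = −(b+2)(v+3bu−16b(b+1))/(2v), z = (v+(3b+4)u−16b(b+1))/(2v). -/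
/-!
Write `u = U / W` and `v = V / W` with `W = bc + (b+2)(3bz + 2c + 2)`,
`U = 16b(b+1)(bz + 2z + c)` and `V = 32b(b+1)(b+2)`. Clearing the denominator `W³`, the
equation of `E₃` becomes the polynomial identity
`V²W - U³ - b²(3U - 16(b+1)W)²W = -4096 b²(b+1)²(b+2)² S(b,c,z)`,
so it holds on `S = 0`. The inverse formulas are, after clearing `2V`, polynomial identities
valid without any hypothesis on `S`; `V ≠ 0` is exactly `b ∉ {0,-1,-2}` in characteristic `≠ 2`.
-/

namespace HypergeometricE3

variable {R : Type*} [CommRing R]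

def cubicS (b c z : R) : R :=
  b * (b + 1) * (b + 2) * z ^ 3 + 3 * b * c * (b + 1) * z ^ 2
    + 3 * b * c * (c + 1) * z + c * (c + 1) * (c + 2)

def denomW (b c z : R) : R := b * c + (b + 2) * (3 * b * z + 2 * c + 2)

def numU (b c z : R) : R := 16 * b * (b + 1) * (b * z + 2 * z + c)

def numV (b : R) : R := 32 * b * (b + 1) * (b + 2)

theorem numV_sq_mul_denomW (b c z : R) :
    numV b ^ 2 * denomW b c z = numU b c z ^ 3
      + b ^ 2 * (3 * numU b c z - 16 * (b + 1) * denomW b c z) ^ 2 * denomW b c z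
      - 4096 * b ^ 2 * (b + 1) ^ 2 * (b + 2) ^ 2 * cubicS b c z := by
  simp only [numV, denomW, numU, cubicS]
  ring

theorem c_mul_two_numV (b c z : R) :
    c * (2 * numV b) =
      -(b + 2) * (numV b + 3 * b * numU b c z - 16 * b * (b + 1) * denomW b c z) := by
  simp only [numV, denomW, numU]
  ring

theorem z_mul_two_numV (b c z : R) :
    z * (2 * numV b) = numV b + (3 * b + 4) * numU b c z - 16 * b * (b + 1) * denomW b c z := by
  simp only [numV, denomW, numU]
  ring

theorem numV_ne_zero {K : Type*} [Field K] [CharZero K] {b : K}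
    (hb0 : b ≠ 0) (hb1 : b ≠ -1) (hb2 : b ≠ -2) : numV b ≠ 0 := by
  have h32 : (32 : K) ≠ 0 := by norm_num
  have hb1' : b + 1 ≠ 0 := fun h => hb1 (eq_neg_of_add_eq_zero_left h)
  have hb2' : b + 2 ≠ 0 := fun h => hb2 (eq_neg_of_add_eq_zero_left h)
  exact mul_ne_zero (mul_ne_zero (mul_ne_zero h32 hb0) hb1') hb2'

end HypergeometricE3

open HypergeometricE3

/-- The inverse map: a point `(c, z)` on the genus-1 curve `S(b,c,z) = 0` (with fixed
`b ∉ {0,-1,-2}`) is sent to a point `(u, v)` of the elliptic curve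
`E₃ : v² = u³ + b²(3u - 16b - 16)²`, and this is inverse to the parametrization
`c = -(b+2)(v + 3bu - 16b(b+1))/(2v)`, `z = (v + (3b+4)u - 16b(b+1))/(2v)`. -/
theorem stmt_14 {K : Type*} [Field K] [CharZero K] (b c z : K)
    (hb0 : b ≠ 0) (hb1 : b ≠ -1) (hb2 : b ≠ -2)
    (hS : b * (b + 1) * (b + 2) * z ^ 3 + 3 * b * c * (b + 1) * z ^ 2
      + 3 * b * c * (c + 1) * z + c * (c + 1) * (c + 2) = 0)
    (hW : b * c + (b + 2) * (3 * b * z + 2 * c + 2) ≠ 0)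
    (u v : K)
    (hu : u = 16 * b * (b + 1) * (b * z + 2 * z + c) /
      (b * c + (b + 2) * (3 * b * z + 2 * c + 2)))
    (hv : v = 32 * b * (b + 1) * (b + 2) /
      (b * c + (b + 2) * (3 * b * z + 2 * c + 2))) :
    v ^ 2 = u ^ 3 + b ^ 2 * (3 * u - 16 * b - 16) ^ 2 ∧
      c = -(b + 2) * (v + 3 * b * u - 16 * b * (b + 1)) / (2 * v) ∧
      z = (v + (3 * b + 4) * u - 16 * b * (b + 1)) / (2 * v) := by
  change denomW b c z ≠ 0 at hW
  change cubicS b c z = 0 at hS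
  change u = numU b c z / denomW b c z at hu
  change v = numV b / denomW b c z at hv
  have hV := numV_ne_zero hb0 hb1 hb2
  subst hu hv
  refine ⟨?_, ?_, ?_⟩
  · field_simp
    linear_combination numV_sq_mul_denomW b c z - 4096 * b ^ 2 * (b + 1) ^ 2 * (b + 2) ^ 2 * hS
  · field_simp
    linear_combination c_mul_two_numV b c z
  · field_simp
    linear_combination z_mul_two_numV b c z
end

section
/- Let K = ℚ(b) be the field of rational functions in one variable b over ℚ, and let E₃ be the elliptic curve over K in Weierstrass form y² = x³ + 9b²x² − 96b²(b+1)x + 256b²(b+1)² (the expansion of y² = x³ + b²(3x − 16b − 16)²). Then the point T = (0, 16b(b+1)) lies on E₃ and is a point of exact order 3 in the group of K-rational points: T ≠ O and T + T + T = O (equivalently, T + T = (0, −16b(b+1))). Moreover, the point (8b, 8b(b+2)) also lies on E₃. -/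
/-!
The tangent to `E₃` at `T = (0, 16b(b+1))` has slope `-3b`, and since the abscissae of its three
intersection points with the curve sum to `(-3b)² - a₂ = 0`, the tangent meets `E₃` only at `T`.
So `T` is a flex: the third intersection point `-(T + T)` of the tangent is `T` itself, whence
`T + T = -T` and `3T = 0`, while `T ≠ O` as an affine point.
-/

open WeierstrassCurve

/-- The elliptic curve `E₃` over `ℚ(b)` in Weierstrass form
`y² = x³ + 9b²x² - 96b²(b+1)x + 256b²(b+1)²`, the expansion of
`y² = x³ + b²(3x - 16b - 16)²`. Here `b` is the generator `RatFunc.X` of `ℚ(b)`. -/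
noncomputable def E₃ : WeierstrassCurve.Affine (RatFunc ℚ) :=
  { a₁ := 0
    a₂ := 9 * RatFunc.X ^ 2
    a₃ := 0
    a₄ := -96 * RatFunc.X ^ 2 * (RatFunc.X + 1)
    a₆ := 256 * RatFunc.X ^ 2 * (RatFunc.X + 1) ^ 2 }

namespace WeierstrassCurve.Affine

variable {F : Type*} [Field F] {W : Affine F} {x y : F}

lemma nonsingular_of_Y_ne (h : W.Equation x y) (hy : y ≠ W.negY x y) : W.Nonsingular x y :=
  (nonsingular_iff x y).mpr ⟨h, Or.inr hy⟩

namespace Point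

variable [DecidableEq F]

lemma add_self_eq_neg_of_addX_slope_eq (h : W.Nonsingular x y) (hy : y ≠ W.negY x y)
    (hflex : W.addX x x (W.slope x x y y) = x) : some _ _ h + some _ _ h = -some _ _ h := by
  rw [add_self_of_Y_ne hy, neg_some, some.injEq]
  refine ⟨hflex, ?_⟩
  rw [addY, negAddY, hflex, sub_self, mul_zero, zero_add]

lemma add_self_add_self_eq_zero_of_addX_slope_eq (h : W.Nonsingular x y) (hy : y ≠ W.negY x y)
    (hflex : W.addX x x (W.slope x x y y) = x) : some _ _ h + some _ _ h + some _ _ h = 0 := by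
  rw [add_self_eq_neg_of_addX_slope_eq h hy hflex, neg_add_cancel]

end Point

end WeierstrassCurve.Affine

lemma RatFunc.X_add_one_ne_zero {K : Type*} [Field K] : (X : RatFunc K) + 1 ≠ 0 := by
  rw [← algebraMap_X, ← map_one (algebraMap (Polynomial K) (RatFunc K)), ← map_add]
  exact algebraMap_ne_zero (Polynomial.X_add_C_ne_zero 1)

namespace E₃

open RatFunc

lemma equation_T : E₃.Equation 0 (16 * X * (X + 1)) := by
  rw [Affine.equation_iff]
  simp only [E₃]
  ring

lemma negY_eq (x y : RatFunc ℚ) : E₃.negY x y = -y := by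
  simp only [Affine.negY, E₃, zero_mul, sub_zero]

lemma Y_ne_negY_T : (16 * X * (X + 1) : RatFunc ℚ) ≠ E₃.negY 0 (16 * X * (X + 1)) := by
  rw [negY_eq]
  exact mt CharZero.eq_neg_self_iff.mp
    (mul_ne_zero (mul_ne_zero (by norm_num) X_ne_zero) X_add_one_ne_zero)

lemma nonsingular_T : E₃.Nonsingular 0 (16 * X * (X + 1)) :=
  Affine.nonsingular_of_Y_ne equation_T Y_ne_negY_T

open Classical in
lemma slope_T : E₃.slope 0 0 (16 * X * (X + 1)) (16 * X * (X + 1)) = -3 * X := by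
  rw [Affine.slope_of_Y_ne rfl Y_ne_negY_T, div_eq_iff (sub_ne_zero.mpr Y_ne_negY_T), negY_eq]
  simp only [E₃]
  ring

open Classical in
lemma addX_slope_T : E₃.addX 0 0 (E₃.slope 0 0 (16 * X * (X + 1)) (16 * X * (X + 1))) = 0 := by
  rw [slope_T, Affine.addX]
  simp only [E₃]
  ring

lemma equation_eight_X : E₃.Equation (8 * X) (8 * X * (X + 2)) := by
  rw [Affine.equation_iff]
  simp only [E₃]
  ring

end E₃

open Classical in
/-- The point `(0, 16b(b+1))` is a nonsingular point of exact order 3 on `E₃`, and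
`(8b, 8b(b+2))` also lies on `E₃`. -/
theorem stmt_15 :
    ∃ h : E₃.Nonsingular 0 (16 * RatFunc.X * (RatFunc.X + 1)),
      Affine.Point.some _ _ h ≠ 0 ∧
      Affine.Point.some _ _ h + Affine.Point.some _ _ h + Affine.Point.some _ _ h = 0 ∧
      E₃.Equation (8 * RatFunc.X) (8 * RatFunc.X * (RatFunc.X + 2)) :=
  ⟨E₃.nonsingular_T, Affine.Point.some_ne_zero _,
    Affine.Point.add_self_add_self_eq_zero_of_addX_slope_eq _ E₃.Y_ne_negY_T E₃.addX_slope_T,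
    E₃.equation_eight_X⟩
end

section
/- Let K be a field of characteristic 0 and let b, c, z ∈ K satisfy the quartic hypergeometric equation T(b,c,z) = 0, where T(b,c,z) = ((bz+c)² + 3bz² + 3c)² + 2(bz²+c)² + 8bcz(z−1)² + 6(bz⁴+c). Assume c(b+c+3) ≠ 0. Define u = −6b(b+1)(b+2)(bz+c+3z)² / (c(b+c+3)) and v = 12b(b+1)(b+2)(b+3)(bz+c+3z)(2bz+2c+3) / (c(b+c+3)). Then v² = u(u² − 4b(5b+9)u + 108b(b+1)²(b+2)); that is, (u,v) is a point on the elliptic curve E₄*: v² = u(u² − 4b(5b+9)u + 108b(b+1)²(b+2)). -/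
/-!
With `s = bz + c + 3z`, `t = 2bz + 2c + 3`, `D = c(b + c + 3)` and `β = b(b+1)(b+2)`, the point
`u = -6βs²/D`, `v = 12β(b+3)st/D` satisfies
`v² - u(u² - 4b(5b+9)u + 108b(b+1)²(b+2)) = 72β²s²/D³ · Q(s, t, D)` for an explicit form `Q`,
and `Q(s, t, D) = 3(b+3)³ T(b, c, z)`. Both are identities (the first also at `D = 0`, where
division by zero makes both sides `0`), so the curve equation holds wherever `T` vanishes.
-/

theorem sq_sub_cubic_of_parametrization {K : Type*} [Field K] (b s t D : K) :
    (12 * b * (b + 1) * (b + 2) * (b + 3) * s * t / D) ^ 2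
      - (-6 * b * (b + 1) * (b + 2) * s ^ 2 / D)
        * ((-6 * b * (b + 1) * (b + 2) * s ^ 2 / D) ^ 2
          - 4 * b * (5 * b + 9) * (-6 * b * (b + 1) * (b + 2) * s ^ 2 / D)
          + 108 * b * (b + 1) ^ 2 * (b + 2))
      = 72 * (b * (b + 1) * (b + 2)) ^ 2 * s ^ 2 / D ^ 3
        * (2 * (b + 3) ^ 2 * t ^ 2 * D + 3 * b * (b + 1) * (b + 2) * s ^ 4
          + 2 * b * (5 * b + 9) * s ^ 2 * D + 9 * (b + 1) * D ^ 2) := by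
  rcases eq_or_ne D 0 with rfl | hD
  · simp
  · field_simp
    ring

theorem parametrization_form_eq {R : Type*} [CommRing R] (b c z : R) :
    2 * (b + 3) ^ 2 * (2 * b * z + 2 * c + 3) ^ 2 * (c * (b + c + 3))
        + 3 * b * (b + 1) * (b + 2) * (b * z + c + 3 * z) ^ 4
        + 2 * b * (5 * b + 9) * (b * z + c + 3 * z) ^ 2 * (c * (b + c + 3))
        + 9 * (b + 1) * (c * (b + c + 3)) ^ 2
      = 3 * (b + 3) ^ 3 * (((b * z + c) ^ 2 + 3 * b * z ^ 2 + 3 * c) ^ 2 + 2 * (b * z ^ 2 + c) ^ 2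
          + 8 * b * c * z * (z - 1) ^ 2 + 6 * (b * z ^ 4 + c)) := by
  ring

theorem stmt_17_general {K : Type*} [Field K] (b c z : K)
    (hT : ((b * z + c) ^ 2 + 3 * b * z ^ 2 + 3 * c) ^ 2 + 2 * (b * z ^ 2 + c) ^ 2
      + 8 * b * c * z * (z - 1) ^ 2 + 6 * (b * z ^ 4 + c) = 0)
    (u v : K)
    (hu : u = -6 * b * (b + 1) * (b + 2) * (b * z + c + 3 * z) ^ 2 / (c * (b + c + 3)))
    (hv : v = 12 * b * (b + 1) * (b + 2) * (b + 3) * (b * z + c + 3 * z) * (2 * b * z + 2 * c + 3)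
      / (c * (b + c + 3))) :
    v ^ 2 = u * (u ^ 2 - 4 * b * (5 * b + 9) * u + 108 * b * (b + 1) ^ 2 * (b + 2)) := by
  rw [← sub_eq_zero, hu, hv, sq_sub_cubic_of_parametrization, parametrization_form_eq, hT]
  simp

/-- Projection of the quartic hypergeometric surface `S₄ : T(b,c,z) = 0` (for fixed `b`)
onto the elliptic curve `E₄* : v² = u(u² - 4b(5b+9)u + 108b(b+1)²(b+2))`. -/
theorem stmt_17 {K : Type*} [Field K] [CharZero K] (b c z : K)
    (hT : ((b * z + c) ^ 2 + 3 * b * z ^ 2 + 3 * c) ^ 2 + 2 * (b * z ^ 2 + c) ^ 2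
      + 8 * b * c * z * (z - 1) ^ 2 + 6 * (b * z ^ 4 + c) = 0)
    (hcb : c * (b + c + 3) ≠ 0)
    (u v : K)
    (hu : u = -6 * b * (b + 1) * (b + 2) * (b * z + c + 3 * z) ^ 2 / (c * (b + c + 3)))
    (hv : v = 12 * b * (b + 1) * (b + 2) * (b + 3) * (b * z + c + 3 * z) * (2 * b * z + 2 * c + 3)
      / (c * (b + c + 3))) :
    v ^ 2 = u * (u ^ 2 - 4 * b * (5 * b + 9) * u + 108 * b * (b + 1) ^ 2 * (b + 2)) :=
  stmt_17_general b c z hT u v hu hv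
end

section
/- Let K be a field of characteristic 0 and let p, q, r, σ ∈ K satisfy σ² = −pqr(p+q+r), q ≠ 0, r ≠ 0, and q + r ≠ 0. Define λ = −(pq+σ)/(q(q+r)) and μ = −(pr−σ)/(r(q+r)). Then p + λq + μr = 0 and p + λ²q + μ²r = 0. -/
/-- The coefficient conditions producing the Belyi maps with `m = 1`: if
`σ² = -pqr(p+q+r)`, `λ = -(pq+σ)/(q(q+r))` and `μ = -(pr-σ)/(r(q+r))`, then
`p + λq + μr = 0` and `p + λ²q + μ²r = 0`. -/
theorem stmt_19 {K : Type*} [Field K] [CharZero K] (p q r σ : K)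
    (hσ : σ ^ 2 = -(p * q * r * (p + q + r)))
    (hq : q ≠ 0) (hr : r ≠ 0) (hqr : q + r ≠ 0)
    (lam mu : K)
    (hlam : lam = -(p * q + σ) / (q * (q + r)))
    (hmu : mu = -(p * r - σ) / (r * (q + r))) :
    p + lam * q + mu * r = 0 ∧ p + lam ^ 2 * q + mu ^ 2 * r = 0 := by
  subst hlam hmu
  constructor <;> field_simp
  · ring
  · linear_combination (q + r) * hσ
end
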